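/- arXiv:math/0107222 — 4 statements merged into one kernel-verified Lean document; each statement's English description precedes it below -/
import Mathlib

section
/- Let Λ be a k-graph and m∈ℕ^k. The map λ↦x_λ, where x_λ(p,q) is the unique middle factor λ'' of the factorisation λ=λ'λ''λ''' with d(λ')=p and d(λ''')=m−q, is a bijection between the set Λ^m of paths of degree m and the set of degree-preserving functors x:Ω_{k,m}→Λ. -/
/-!
By unique factorisation, a path `λ` of degree `m` has a unique factor `λ(p, q)` of degree
`q - p` sitting between a prefix of degree `p` and a suffix of degree `m - q`. Comparing the
two factorisations of `λ` at the common degree `q` gives `λ(p, q) λ(q, r) = λ(p, r)`, so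
`(p, q) ↦ λ(p, q)` is a graph morphism `Ω_{k,m} → Λ`. Conversely a graph morphism `x` is
recovered from `x(0, m)`, since `x(0, m) = x(0, p) x(p, q) x(q, m)` exhibits `x(p, q)` as the
middle factor of `x(0, m)`.
-/

open scoped ENNReal

/-- A `k`-graph: a countable category `Λ` together with a degree functor
`d : Λ → ℕ^k` satisfying the unique factorisation property. -/
structure KGraph (k : ℕ) where
  Obj : Type
  Path : Type
  countable_path : Countable Path
  r : Path → Obj
  s : Path → Obj
  ι : Obj → Path
  comp : (μ ν : Path) → s μ = r ν → Path
  d : Path → (Fin k → ℕ)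
  r_ι : ∀ v, r (ι v) = v
  s_ι : ∀ v, s (ι v) = v
  d_ι : ∀ v, d (ι v) = 0
  r_comp : ∀ μ ν h, r (comp μ ν h) = r μ
  s_comp : ∀ μ ν h, s (comp μ ν h) = s ν
  d_comp : ∀ μ ν h, d (comp μ ν h) = d μ + d ν
  comp_ι_left : ∀ μ (h : s (ι (r μ)) = r μ), comp (ι (r μ)) μ h = μ
  comp_ι_right : ∀ μ (h : s μ = r (ι (s μ))), comp μ (ι (s μ)) h = μ
  comp_assoc : ∀ μ ν ξ (h1 : s μ = r ν) (h2 : s ν = r ξ)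
      (h3 : s (comp μ ν h1) = r ξ) (h4 : s μ = r (comp ν ξ h2)),
      comp (comp μ ν h1) ξ h3 = comp μ (comp ν ξ h2) h4
  factor : ∀ lam (m n : Fin k → ℕ), d lam = m + n →
      ∃! p : Path × Path, ∃ h : s p.1 = r p.2,
        comp p.1 p.2 h = lam ∧ d p.1 = m ∧ d p.2 = n

namespace KGraph

/-- The standard generator `e_i` of `ℕ^k`. -/
def e (k : ℕ) (i : Fin k) : Fin k → ℕ := Pi.single i 1

variable {k : ℕ} (Λ : KGraph k)

/-- `Λ^m`, the paths of degree `m`. -/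
def degSet (m : Fin k → ℕ) : Set Λ.Path := {lam | Λ.d lam = m}

/-- `Λ^m(v)`, the paths of degree `m` with range `v`. -/
def degAt (m : Fin k → ℕ) (v : Λ.Obj) : Set Λ.Path :=
  {lam | Λ.d lam = m ∧ Λ.r lam = v}

/-- `Λ^{≤ q}`: paths `λ` with `d λ ≤ q` which cannot be extended within degree `q`. -/
def le (q : Fin k → ℕ) : Set Λ.Path :=
  {lam | Λ.d lam ≤ q ∧
    ∀ i : Fin k, Λ.d lam + e k i ≤ q → Λ.degAt (e k i) (Λ.s lam) = ∅}

/-- `Λ^{≤ q}(v)`. -/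
def leAt (q : Fin k → ℕ) (v : Λ.Obj) : Set Λ.Path :=
  {lam | lam ∈ Λ.le q ∧ Λ.r lam = v}

/-- Row-finiteness: each `Λ^m(v)` is finite. -/
def RowFinite : Prop := ∀ (v : Λ.Obj) (m : Fin k → ℕ), (Λ.degAt m v).Finite

/-- No sources: each `Λ^m(v)` is nonempty. -/
def NoSources : Prop := ∀ (v : Λ.Obj) (m : Fin k → ℕ), (Λ.degAt m v).Nonempty

/-- Local convexity. -/
def LocallyConvex : Prop :=
  ∀ (v : Λ.Obj) (i j : Fin k), i ≠ j →
    ∀ lam μ, lam ∈ Λ.degAt (e k i) v → μ ∈ Λ.degAt (e k j) v →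
      (Λ.degAt (e k j) (Λ.s lam)).Nonempty ∧ (Λ.degAt (e k i) (Λ.s μ)).Nonempty

section CK

variable {A : Type} [Ring A] [StarRing A]

/-- Cuntz-Krieger relations (1)-(3). -/
structure IsCK13 (S : Λ.Path → A) : Prop where
  proj : ∀ v, S (Λ.ι v) * S (Λ.ι v) = S (Λ.ι v)
  selfadj : ∀ v, star (S (Λ.ι v)) = S (Λ.ι v)
  orth : ∀ v w, v ≠ w → S (Λ.ι v) * S (Λ.ι w) = 0
  mul : ∀ μ ν (h : Λ.s μ = Λ.r ν), S (Λ.comp μ ν h) = S μ * S ν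
  src : ∀ lam, star (S lam) * S lam = S (Λ.ι (Λ.s lam))

/-- A Cuntz-Krieger `Λ`-family: relations (1)-(4). -/
structure IsCKFamily (S : Λ.Path → A) extends IsCK13 Λ S : Prop where
  sum : ∀ (v : Λ.Obj) (m : Fin k → ℕ),
    S (Λ.ι v) = ∑ᶠ lam ∈ Λ.leAt m v, S lam * star (S lam)

end CK

/-- Hereditary subsets of `Λ^0`. -/
def Hereditary (H : Set Λ.Obj) : Prop :=
  ∀ lam : Λ.Path, Λ.r lam ∈ H → Λ.s lam ∈ H

/-- The operator `Σ` used in the inductive construction of the saturation. -/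
def Sig (F : Set Λ.Obj) : Set Λ.Obj :=
  ⋃ i : Fin k, {v | ∀ lam ∈ Λ.leAt (e k i) v, Λ.s lam ∈ F}

/-- Saturated subsets of `Λ^0`. -/
def Saturated (H : Set Λ.Obj) : Prop :=
  ∀ (v : Λ.Obj) (i : Fin k), (∀ lam ∈ Λ.leAt (e k i) v, Λ.s lam ∈ H) → v ∈ H

/-- The saturation: smallest saturated set containing `H`. -/
def saturation (H : Set Λ.Obj) : Set Λ.Obj :=
  ⋂₀ {S | Λ.Saturated S ∧ H ⊆ S}

end KGraph

/-- A boundary path: a degree-preserving graph morphism `x : Ω_{k,m} → Λ`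
for some `m ∈ (ℕ ∪ {∞})^k`, such that whenever `p + e_i ≰ m`, the vertex `x(p)`
receives no edges of degree `e_i`. -/
structure BPath {k : ℕ} (Λ : KGraph k) where
  deg : Fin k → ℕ∞
  toFun : ∀ p q : Fin k → ℕ, p ≤ q → (∀ i, (q i : ℕ∞) ≤ deg i) → Λ.Path
  d_toFun : ∀ p q h1 h2, Λ.d (toFun p q h1 h2) = q - p
  comp_toFun : ∀ p q r (hpq : p ≤ q) (hqr : q ≤ r) (hpr : p ≤ r)
      (hr : ∀ i, (r i : ℕ∞) ≤ deg i) (hq : ∀ i, (q i : ℕ∞) ≤ deg i),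
    ∃ hc : Λ.s (toFun p q hpq hq) = Λ.r (toFun q r hqr hr),
      Λ.comp _ _ hc = toFun p r hpr hr
  bdry : ∀ (p : Fin k → ℕ) (hp : ∀ i, (p i : ℕ∞) ≤ deg i) (i : Fin k),
    ¬ ((p i : ℕ∞) + 1 ≤ deg i) →
    Λ.degAt (KGraph.e k i) (Λ.r (toFun p p le_rfl hp)) = ∅

namespace BPath

variable {k : ℕ} {Λ : KGraph k}

/-- The range of a boundary path. -/
def r (x : BPath Λ) : Λ.Obj :=
  Λ.r (x.toFun 0 0 le_rfl (fun i => by simp))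

end BPath

/-- An infinite path: a graph morphism `x : Ω_k → Λ`. -/
structure InfPath {k : ℕ} (Λ : KGraph k) where
  toFun : ∀ p q : Fin k → ℕ, p ≤ q → Λ.Path
  d_toFun : ∀ p q h, Λ.d (toFun p q h) = q - p
  comp_toFun : ∀ p q r (hpq : p ≤ q) (hqr : q ≤ r) (hpr : p ≤ r),
    ∃ hc : Λ.s (toFun p q hpq) = Λ.r (toFun q r hqr),
      Λ.comp _ _ hc = toFun p r hpr

namespace InfPath

variable {k : ℕ} {Λ : KGraph k}

/-- The range of an infinite path. -/
def r (x : InfPath Λ) : Λ.Obj := Λ.r (x.toFun 0 0 le_rfl)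

/-- The shift `σ^p`. -/
def shift (p : Fin k → ℕ) (x : InfPath Λ) : InfPath Λ where
  toFun a b h := x.toFun (a + p) (b + p) (add_le_add_left h p)
  d_toFun a b h := by
    rw [x.d_toFun]
    funext i
    simp only [Pi.sub_apply, Pi.add_apply]
    omega
  comp_toFun a b c hab hbc hac :=
    x.comp_toFun (a + p) (b + p) (c + p) (add_le_add_left hab p)
      (add_le_add_left hbc p) (add_le_add_left hac p)

end InfPath

/-- A degree-preserving functor (graph morphism) `x : Ω_{k,m} → Λ` for
`m ∈ ℕ^k`: it assigns to each morphism `(p,q)` of `Ω_{k,m}` a path `x(p,q)` of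
degree `q - p`, compatibly with composition. -/
structure GraphMor {k : ℕ} (Λ : KGraph k) (m : Fin k → ℕ) where
  toFun : ∀ p q : Fin k → ℕ, p ≤ q → q ≤ m → Λ.Path
  d_toFun : ∀ p q h1 h2, Λ.d (toFun p q h1 h2) = q - p
  comp_toFun : ∀ p q r (hpq : p ≤ q) (hqr : q ≤ r) (hpr : p ≤ r)
      (hq : q ≤ m) (hr : r ≤ m),
    ∃ hc : Λ.s (toFun p q hpq hq) = Λ.r (toFun q r hqr hr),
      Λ.comp _ _ hc = toFun p r hpr hr

namespace KGraph

variable {k : ℕ} {Λ : KGraph k}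

theorem eq_of_comp_eq_comp {μ ν μ' ν' : Λ.Path} {h : Λ.s μ = Λ.r ν} {h' : Λ.s μ' = Λ.r ν'}
    (heq : Λ.comp μ ν h = Λ.comp μ' ν' h') (hd : Λ.d μ = Λ.d μ') : μ = μ' ∧ ν = ν' := by
  have hdν : Λ.d ν = Λ.d ν' :=
    add_left_cancel (by rw [← Λ.d_comp μ ν h, heq, Λ.d_comp, hd])
  exact Prod.ext_iff.mp <| (Λ.factor _ (Λ.d μ) (Λ.d ν) (Λ.d_comp μ ν h)).unique
    (y₁ := (μ, ν)) (y₂ := (μ', ν')) ⟨h, rfl, rfl, rfl⟩ ⟨h', heq.symm, hd.symm, hdν.symm⟩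

variable (Λ) in
def IsMiddleFactor (lam : Λ.Path) (m p q : Fin k → ℕ) (x : Λ.Path) : Prop :=
  ∃ (μ ν : Λ.Path) (hc1 : Λ.s x = Λ.r ν) (hc2 : Λ.s μ = Λ.r (Λ.comp x ν hc1)),
    Λ.comp μ (Λ.comp x ν hc1) hc2 = lam ∧ Λ.d μ = p ∧ Λ.d ν = m - q

theorem exists_isMiddleFactor {lam : Λ.Path} {m p q : Fin k → ℕ} (hd : Λ.d lam = m)
    (h1 : p ≤ q) (h2 : q ≤ m) : ∃ x, Λ.IsMiddleFactor lam m p q x := by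
  obtain ⟨⟨μ, ρ⟩, ⟨hμρ, rfl, hdμ, hdρ⟩, -⟩ :=
    Λ.factor lam p (m - p) (hd.trans (add_tsub_cancel_of_le (h1.trans h2)).symm)
  obtain ⟨⟨x, ν⟩, ⟨hxν, rfl, -, hdν⟩, -⟩ :=
    Λ.factor ρ (q - p) (m - q)
      (hdρ.trans ((tsub_add_tsub_cancel h2 h1).symm.trans (add_comm _ _)))
  exact ⟨x, μ, ν, hxν, hμρ, rfl, hdμ, hdν⟩

theorem IsMiddleFactor.unique {lam x y : Λ.Path} {m p q : Fin k → ℕ}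
    (hx : Λ.IsMiddleFactor lam m p q x) (hy : Λ.IsMiddleFactor lam m p q y) : x = y := by
  obtain ⟨μ, ν, hc1, hc2, rfl, hdμ, hdν⟩ := hx
  obtain ⟨μ', ν', hc1', hc2', heq, hdμ', hdν'⟩ := hy
  obtain ⟨-, hxν⟩ := eq_of_comp_eq_comp heq.symm (hdμ.trans hdμ'.symm)
  have hdxy : Λ.d x = Λ.d y :=
    add_right_cancel (b := Λ.d ν) (by rw [← Λ.d_comp x ν hc1, hxν, Λ.d_comp, hdν', hdν])
  exact (eq_of_comp_eq_comp hxν hdxy).1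

theorem IsMiddleFactor.d_eq {lam x : Λ.Path} {m p q : Fin k → ℕ}
    (hx : Λ.IsMiddleFactor lam m p q x) (hd : Λ.d lam = m) (h1 : p ≤ q) (h2 : q ≤ m) :
    Λ.d x = q - p := by
  obtain ⟨μ, ν, hc1, hc2, rfl, rfl, hdν⟩ := hx
  rw [Λ.d_comp, Λ.d_comp, hdν] at hd
  funext i
  have := congrFun hd i; have := h1 i; have := h2 i
  simp only [Pi.add_apply, Pi.sub_apply] at *
  omega

theorem isMiddleFactor_self {lam : Λ.Path} {m : Fin k → ℕ} :
    Λ.IsMiddleFactor lam m 0 m lam := by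
  refine ⟨Λ.ι (Λ.r lam), Λ.ι (Λ.s lam), (Λ.r_ι _).symm, by rw [Λ.s_ι, Λ.r_comp], ?_,
    Λ.d_ι _, by rw [Λ.d_ι, tsub_self]⟩
  simp only [Λ.comp_ι_right, Λ.comp_ι_left]

theorem IsMiddleFactor.comp {lam x y : Λ.Path} {m p q r : Fin k → ℕ}
    (hx : Λ.IsMiddleFactor lam m p q x) (hy : Λ.IsMiddleFactor lam m q r y)
    (hd : Λ.d lam = m) (hpq : p ≤ q) (hqr : q ≤ r) (hrm : r ≤ m) :
    ∃ hc : Λ.s x = Λ.r y, Λ.IsMiddleFactor lam m p r (Λ.comp x y hc) := by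
  have hdx := hx.d_eq hd hpq (hqr.trans hrm)
  have hdy := hy.d_eq hd hqr hrm
  obtain ⟨μ, ν, hc1, hc2, rfl, hdμ, hdν⟩ := hx
  obtain ⟨μ', ν', hc1', hc2', heq, hdμ', hdν'⟩ := hy
  have hμx : Λ.s μ = Λ.r x := hc2.trans (Λ.r_comp _ _ _)
  -- regroup `μ (x ν)` as `(μ x) ν` and compare with `μ' (y ν')` at degree `q`
  have hμxν : Λ.s (Λ.comp μ x hμx) = Λ.r ν := (Λ.s_comp _ _ _).trans hc1
  obtain ⟨rfl, rfl⟩ := eq_of_comp_eq_comp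
    ((Λ.comp_assoc μ x ν hμx hc1 hμxν hc2).trans heq.symm)
    (by rw [Λ.d_comp, hdμ, hdx, hdμ', add_tsub_cancel_of_le hpq])
  have hxy : Λ.s x = Λ.r y := ((Λ.s_comp μ x hμx).symm.trans hc2').trans (Λ.r_comp _ _ _)
  have hxyν : Λ.s (Λ.comp x y hxy) = Λ.r ν' := (Λ.s_comp _ _ _).trans hc1'
  refine ⟨hxy, μ, ν', hxyν, by rw [Λ.r_comp, Λ.r_comp]; exact hμx, ?_, hdμ, hdν'⟩
  simp only [Λ.comp_assoc x y ν' hxy hc1' hxyν hc1]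

variable (Λ) in
noncomputable def middleFactor (lam : Λ.Path) {m p q : Fin k → ℕ} (hd : Λ.d lam = m)
    (h1 : p ≤ q) (h2 : q ≤ m) : Λ.Path :=
  (exists_isMiddleFactor hd h1 h2).choose

theorem isMiddleFactor_middleFactor {lam : Λ.Path} {m p q : Fin k → ℕ} (hd : Λ.d lam = m)
    (h1 : p ≤ q) (h2 : q ≤ m) :
    Λ.IsMiddleFactor lam m p q (Λ.middleFactor lam hd h1 h2) :=
  (exists_isMiddleFactor hd h1 h2).choose_spec

theorem IsMiddleFactor.eq_middleFactor {lam x : Λ.Path} {m p q : Fin k → ℕ}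
    (hx : Λ.IsMiddleFactor lam m p q x) (hd : Λ.d lam = m) (h1 : p ≤ q) (h2 : q ≤ m) :
    x = Λ.middleFactor lam hd h1 h2 :=
  hx.unique (isMiddleFactor_middleFactor hd h1 h2)

end KGraph

namespace GraphMor

open KGraph

variable {k : ℕ} {Λ : KGraph k} {m : Fin k → ℕ}

theorem ext {G H : GraphMor Λ m} (h : ∀ p q h1 h2, G.toFun p q h1 h2 = H.toFun p q h1 h2) :
    G = H := by
  cases G; cases H
  congr
  funext p q h1 h2
  exact h p q h1 h2

noncomputable def ofPath (lam : Λ.Path) (hd : Λ.d lam = m) : GraphMor Λ m where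
  toFun _ _ h1 h2 := Λ.middleFactor lam hd h1 h2
  d_toFun _ _ h1 h2 := (isMiddleFactor_middleFactor hd h1 h2).d_eq hd h1 h2
  comp_toFun _ _ _ hpq hqr hpr hq hr := by
    obtain ⟨hc, h⟩ := (isMiddleFactor_middleFactor hd hpq hq).comp
      (isMiddleFactor_middleFactor hd hqr hr) hd hpq hqr hr
    exact ⟨hc, h.eq_middleFactor hd hpr hr⟩

def toPath (G : GraphMor Λ m) : Λ.Path := G.toFun 0 m zero_le le_rfl

theorem d_toPath (G : GraphMor Λ m) : Λ.d G.toPath = m := by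
  rw [toPath, G.d_toFun, tsub_zero]

theorem isMiddleFactor_toFun (G : GraphMor Λ m) {p q : Fin k → ℕ} (h1 : p ≤ q) (h2 : q ≤ m) :
    Λ.IsMiddleFactor G.toPath m p q (G.toFun p q h1 h2) := by
  obtain ⟨hpq, hpqm⟩ := G.comp_toFun p q m h1 h2 (h1.trans h2) h2 le_rfl
  obtain ⟨h0p, h0pm⟩ := G.comp_toFun 0 p m zero_le (h1.trans h2) zero_le _ le_rfl
  refine ⟨G.toFun 0 p zero_le (h1.trans h2), G.toFun q m h2 le_rfl, hpq,
    h0p.trans (congrArg Λ.r hpqm).symm, ?_, by rw [G.d_toFun, tsub_zero], G.d_toFun _ _ _ _⟩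
  simp only [hpqm]
  exact h0pm

variable (Λ m) in
noncomputable def ofPathEquiv :
    {lam : Λ.Path // Λ.d lam = m} ≃ GraphMor Λ m where
  toFun lam := ofPath lam.1 lam.2
  invFun G := ⟨G.toPath, G.d_toPath⟩
  left_inv lam := Subtype.ext (isMiddleFactor_self.eq_middleFactor lam.2 zero_le le_rfl).symm
  right_inv G := ext fun _ _ h1 h2 =>
    ((G.isMiddleFactor_toFun h1 h2).eq_middleFactor G.d_toPath h1 h2).symm

end GraphMor

/-- the map `λ ↦ x_λ`, where `x_λ(p,q)` is the middle factor of
`λ = λ'λ''λ'''` with `d λ' = p`, `d λ''' = m - q`, is a bijection from `Λ^m`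
onto the graph morphisms `Ω_{k,m} → Λ`. -/
theorem stmt2 {k : ℕ} (Λ : KGraph k) (m : Fin k → ℕ) :
    ∃ F : {lam : Λ.Path // Λ.d lam = m} → GraphMor Λ m,
      Function.Bijective F ∧
      ∀ (lam : {lam : Λ.Path // Λ.d lam = m}) (p q : Fin k → ℕ)
        (h1 : p ≤ q) (h2 : q ≤ m),
        ∃ (μ ν : Λ.Path) (hc1 : Λ.s ((F lam).toFun p q h1 h2) = Λ.r ν)
          (hc2 : Λ.s μ = Λ.r (Λ.comp ((F lam).toFun p q h1 h2) ν hc1)),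
          Λ.comp μ (Λ.comp ((F lam).toFun p q h1 h2) ν hc1) hc2 = lam.1 ∧
          Λ.d μ = p ∧ Λ.d ν = m - q :=
  ⟨fun lam => GraphMor.ofPath lam.1 lam.2, (GraphMor.ofPathEquiv Λ m).bijective,
    fun lam _ _ h1 h2 => KGraph.isMiddleFactor_middleFactor lam.2 h1 h2⟩
end

section
/- Let (Λ,d) be a locally convex k-graph. For every vertex v, every m∈ℕ^k∖{0}, and every j with m_j≥1, Λ^{≤m}(v) = {λ'λ'' : λ'∈Λ^{≤(m−e_j)}(v) and λ''∈Λ^{≤e_j}(s(λ'))}. -/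
open scoped ENNReal

/-
If `d(λ)_j < m_j`, then `λ` already lies in `Λ^{≤ m - e_j}` and `s(λ)` receives no edge of degree
`e_j`, so `λ = λ · s(λ)` is the required factorisation. If `d(λ)_j = m_j`, factor off the last
edge `λ''` of degree `e_j`; an edge of degree `e_i`, `i ≠ j`, at `s(λ')` would by local convexity
give one at `s(λ'') = s(λ)`, contradicting `λ ∈ Λ^{≤ m}`.
-/

namespace KGraph

variable {k : ℕ}

lemma e_apply (i i' : Fin k) : e k i i' = if i' = i then 1 else 0 :=
  Pi.single_apply i 1 i'

lemma e_le_iff {m : Fin k → ℕ} {j : Fin k} : e k j ≤ m ↔ 1 ≤ m j := by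
  refine ⟨fun h => by simpa [e] using h j, fun h i => ?_⟩
  rw [e_apply]
  split_ifs with hi
  · exact hi ▸ h
  · exact Nat.zero_le _

lemma e_le_e_iff {i j : Fin k} : e k i ≤ e k j ↔ i = j := by
  refine ⟨fun h => ?_, fun h => h ▸ le_rfl⟩
  by_contra hij
  simpa [e_apply, hij] using h i

lemma add_e_le_iff {a m : Fin k → ℕ} {j : Fin k} : a + e k j ≤ m ↔ a ≤ m ∧ a j < m j := by
  refine ⟨fun h => ⟨fun i => ?_, by simpa [e_apply] using h j⟩, fun ⟨hle, hlt⟩ i => ?_⟩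
  · exact (Nat.le_add_right _ _).trans (h i)
  · have := hle i
    simp only [Pi.add_apply, e_apply]
    split_ifs with hi
    · exact hi ▸ hlt
    · omega

lemma le_e_iff {a : Fin k → ℕ} {j : Fin k} : a ≤ e k j ↔ a = 0 ∨ a = e k j := by
  refine ⟨fun h => ?_, ?_⟩
  · rcases Nat.le_one_iff_eq_zero_or_eq_one.1 (by simpa [e] using h j) with h0 | h1
    · refine Or.inl (funext fun i => ?_)
      have := h i
      rw [e_apply] at this
      split_ifs at this with hi
      · exact hi ▸ h0
      · simpa using this
    · refine Or.inr (funext fun i => ?_)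
      have := h i
      rw [e_apply] at this ⊢
      split_ifs at this ⊢ with hi
      · exact hi ▸ h1
      · simpa using this
  · rintro (rfl | rfl)
    exacts [zero_le, le_rfl]

lemma not_add_e_le_self (a : Fin k → ℕ) (i : Fin k) : ¬ a + e k i ≤ a := by
  rw [add_e_le_iff]
  exact fun h => lt_irrefl _ h.2

variable (Λ : KGraph k)

lemma eq_ι_of_d_eq_zero {lam : Λ.Path} (h : Λ.d lam = 0) : lam = Λ.ι (Λ.r lam) := by
  obtain ⟨p, -, huniq⟩ := Λ.factor lam 0 0 (by simpa using h)
  have hleft : (Λ.ι (Λ.r lam), lam) = p :=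
    huniq _ ⟨by rw [Λ.s_ι], Λ.comp_ι_left lam _, Λ.d_ι _, h⟩
  have hright : (lam, Λ.ι (Λ.s lam)) = p :=
    huniq _ ⟨(Λ.r_ι _).symm, Λ.comp_ι_right lam _, h, Λ.d_ι _⟩
  exact congrArg Prod.fst (hright.trans hleft.symm)

lemma comp_mem_degAt {p q : Fin k → ℕ} {v : Λ.Obj} {μ ν : Λ.Path} (hμ : μ ∈ Λ.degAt p v)
    (hν : ν ∈ Λ.degAt q (Λ.s μ)) : Λ.comp μ ν hν.2.symm ∈ Λ.degAt (p + q) v :=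
  ⟨by rw [Λ.d_comp, hμ.1, hν.1], by rw [Λ.r_comp, hμ.2]⟩

lemma degAt_nonempty_of_add {p q : Fin k → ℕ} {v : Λ.Obj} (h : (Λ.degAt (p + q) v).Nonempty) :
    (Λ.degAt p v).Nonempty := by
  obtain ⟨lam, hd, hr⟩ := h
  obtain ⟨⟨μ, ν⟩, ⟨hc, hcomp, hμ, -⟩, -⟩ := Λ.factor lam p q hd
  exact ⟨μ, hμ, by rw [← hr, ← hcomp, Λ.r_comp]⟩

lemma mem_le_of_d_eq {lam : Λ.Path} {q : Fin k → ℕ} (h : Λ.d lam = q) : lam ∈ Λ.le q :=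
  ⟨h.le, fun i hi => absurd (h ▸ hi) (not_add_e_le_self q i)⟩

lemma mem_le_of_le {lam : Λ.Path} {q m : Fin k → ℕ} (h : lam ∈ Λ.le m) (hq : Λ.d lam ≤ q)
    (hqm : q ≤ m) : lam ∈ Λ.le q :=
  ⟨hq, fun i hi => h.2 i (hi.trans hqm)⟩

lemma ι_mem_le_e_iff {w : Λ.Obj} {j : Fin k} :
    Λ.ι w ∈ Λ.le (e k j) ↔ Λ.degAt (e k j) w = ∅ := by
  simp only [le, Set.mem_ofPred_eq, d_ι, zero_add, s_ι, zero_le, true_and]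
  exact ⟨fun h => h j le_rfl, fun h i hi => e_le_e_iff.1 hi ▸ h⟩

lemma mem_le_of_mem_le_sub_e {lam : Λ.Path} {m : Fin k → ℕ} {j : Fin k} (hj : e k j ≤ m)
    (h : lam ∈ Λ.le (m - e k j)) (hs : Λ.degAt (e k j) (Λ.s lam) = ∅) : lam ∈ Λ.le m := by
  have hlt : Λ.d lam + e k j ≤ m := (le_tsub_iff_right hj).1 h.1
  refine ⟨(add_e_le_iff.1 hlt).1, fun i hi => ?_⟩
  obtain rfl | hij := eq_or_ne i j
  · exact hs
  · refine h.2 i ((le_tsub_iff_right hj).2 (add_e_le_iff.2 ⟨hi, ?_⟩))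
    simpa [e_apply, hij.symm] using (add_e_le_iff.1 hlt).2

lemma comp_mem_le {lam1 lam2 : Λ.Path} {m : Fin k → ℕ} {j : Fin k} (hj : e k j ≤ m)
    (hc : Λ.s lam1 = Λ.r lam2) (h1 : lam1 ∈ Λ.le (m - e k j)) (h2 : lam2 ∈ Λ.le (e k j)) :
    Λ.comp lam1 lam2 hc ∈ Λ.le m := by
  rcases le_e_iff.1 h2.1 with h0 | he
  · obtain rfl : lam2 = Λ.ι (Λ.s lam1) := hc ▸ Λ.eq_ι_of_d_eq_zero h0
    rw [Λ.comp_ι_right]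
    exact Λ.mem_le_of_mem_le_sub_e hj h1 ((Λ.ι_mem_le_e_iff).1 h2)
  · have hd : Λ.d (Λ.comp lam1 lam2 hc) = Λ.d lam1 + e k j := by rw [Λ.d_comp, he]
    refine ⟨hd ▸ (le_tsub_iff_right hj).1 h1.1, fun i hi => ?_⟩
    rw [Λ.s_comp, Set.eq_empty_iff_forall_notMem]
    intro μ hμ
    -- `lam2 μ` has degree `e_j + e_i = e_i + e_j`, so it starts with an edge of degree `e_i`
    have hpath := Λ.comp_mem_degAt ⟨he, hc.symm⟩ hμ
    rw [add_comm] at hpath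
    refine (Λ.degAt_nonempty_of_add ⟨_, hpath⟩).ne_empty (h1.2 i ?_)
    rw [le_tsub_iff_right hj, add_right_comm, ← hd]
    exact hi

lemma mem_le_sub_e_of_comp_mem_le (hlc : Λ.LocallyConvex) {lam1 lam2 : Λ.Path}
    {m : Fin k → ℕ} {j : Fin k} (hj : e k j ≤ m) (hc : Λ.s lam1 = Λ.r lam2)
    (h : Λ.comp lam1 lam2 hc ∈ Λ.le m) (hfull : Λ.d (Λ.comp lam1 lam2 hc) j = m j)
    (h2 : Λ.d lam2 = e k j) : lam1 ∈ Λ.le (m - e k j) := by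
  have hd : Λ.d (Λ.comp lam1 lam2 hc) = Λ.d lam1 + e k j := by rw [Λ.d_comp, h2]
  refine ⟨(le_tsub_iff_right hj).2 (hd ▸ h.1), fun i hi => ?_⟩
  have hext : Λ.d (Λ.comp lam1 lam2 hc) + e k i ≤ m := by
    rw [hd, add_right_comm, ← le_tsub_iff_right hj]
    exact hi
  obtain rfl | hij := eq_or_ne i j
  · exact absurd hfull (add_e_le_iff.1 hext).2.ne
  · rw [Set.eq_empty_iff_forall_notMem]
    intro ν hν
    have hconv := (hlc _ i j hij ν lam2 hν ⟨h2, hc.symm⟩).2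
    rw [← Λ.s_comp lam1 lam2 hc, h.2 i hext] at hconv
    exact hconv.ne_empty rfl

end KGraph

theorem stmt9_general {k : ℕ} (Λ : KGraph k) (hlc : Λ.LocallyConvex) (v : Λ.Obj)
    (m : Fin k → ℕ) (j : Fin k) (hj : 1 ≤ m j) :
    Λ.leAt m v =
      {lam | ∃ (lam1 lam2 : Λ.Path) (hc : Λ.s lam1 = Λ.r lam2),
        lam = Λ.comp lam1 lam2 hc ∧
        lam1 ∈ Λ.leAt (m - KGraph.e k j) v ∧
        lam2 ∈ Λ.leAt (KGraph.e k j) (Λ.s lam1)} := by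
  have hej : KGraph.e k j ≤ m := KGraph.e_le_iff.2 hj
  ext lam
  constructor
  · rintro ⟨hle, rfl⟩
    rcases (hle.1 j).lt_or_eq with hlt | hfull
    · have hext : Λ.d lam + KGraph.e k j ≤ m := KGraph.add_e_le_iff.2 ⟨hle.1, hlt⟩
      exact ⟨lam, Λ.ι (Λ.s lam), (Λ.r_ι _).symm, (Λ.comp_ι_right lam _).symm,
        ⟨Λ.mem_le_of_le hle ((le_tsub_iff_right hej).2 hext) tsub_le_self, rfl⟩,
        ⟨(Λ.ι_mem_le_e_iff).2 (hle.2 j hext), Λ.r_ι _⟩⟩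
    · have hdj : KGraph.e k j ≤ Λ.d lam := KGraph.e_le_iff.2 (hfull ▸ hj)
      obtain ⟨⟨lam1, lam2⟩, ⟨hc, rfl, -, h2⟩, -⟩ :=
        Λ.factor lam (Λ.d lam - KGraph.e k j) (KGraph.e k j) (tsub_add_cancel_of_le hdj).symm
      exact ⟨lam1, lam2, hc, rfl,
        ⟨Λ.mem_le_sub_e_of_comp_mem_le hlc hej hc hle hfull h2, (Λ.r_comp _ _ _).symm⟩,
        ⟨Λ.mem_le_of_d_eq h2, hc.symm⟩⟩
  · rintro ⟨lam1, lam2, hc, rfl, ⟨h1, rfl⟩, h2, -⟩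
    exact ⟨Λ.comp_mem_le hej hc h1 h2, Λ.r_comp _ _ _⟩

/-- in a locally convex `k`-graph, for `m ≠ 0` and `m_j ≥ 1`,
`Λ^{≤ m}(v) = {λ'λ'' : λ' ∈ Λ^{≤ m - e_j}(v), λ'' ∈ Λ^{≤ e_j}(s λ')}`. -/
theorem stmt9 {k : ℕ} (Λ : KGraph k) (hlc : Λ.LocallyConvex) (v : Λ.Obj)
    (m : Fin k → ℕ) (hm : m ≠ 0) (j : Fin k) (hj : 1 ≤ m j) :
    Λ.leAt m v =
      {lam | ∃ (lam1 lam2 : Λ.Path) (hc : Λ.s lam1 = Λ.r lam2),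
        lam = Λ.comp lam1 lam2 hc ∧
        lam1 ∈ Λ.leAt (m - KGraph.e k j) v ∧
        lam2 ∈ Λ.leAt (KGraph.e k j) (Λ.s lam1)} :=
  stmt9_general Λ hlc v m j hj
end

section
/- In the 2-graph with a single vertex-pair structure given by vertices v,w,z, an edge e of degree (1,0) from w to v, and an edge f of degree (0,1) from z to v (with no other edges), every Cuntz-Krieger family {s_λ} is identically zero: the relations for m=(1,0), m=(0,1), and m=(1,1) force s_v = s_e s_e* = s_f s_f* and s_v = s_e s_e* + s_f s_f*, hence s_v = 0 and all s_λ = 0. -/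
open scoped ENNReal

/-!
Since `e` and `f` cannot be extended within degree `(1,1)`, the Cuntz–Krieger relations at `v`
for `m = (1,0)`, `(0,1)`, `(1,1)` read `s_v = s_e s_e*`, `s_v = s_f s_f*` and
`s_v = s_e s_e* + s_f s_f*`, so `s_v = 2 s_v = 0`. Then `s_e = s_v s_e` and `s_f` vanish, hence
so do `s_w = s_e* s_e` and `s_z`, and finally every `s_λ = s_{r(λ)} s_λ`.
-/

namespace KGraph

variable {k : ℕ}

lemma e_apply_self (i : Fin k) : e k i i = 1 := Pi.single_eq_same i 1

lemma e_ne_zero (i : Fin k) : e k i ≠ 0 := fun h => by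
  simpa [e_apply_self] using congrFun h i

lemma e_injective : Function.Injective (e k) := fun _ _ h => e_le_e_iff.mp h.le

lemma eq_zero_or_eq_e_of_le_e {m : Fin k → ℕ} {i : Fin k} (h : m ≤ e k i) :
    m = 0 ∨ m = e k i := by
  have hj : ∀ j, j ≠ i → m j = 0 := fun j hj => by
    simpa [e, Pi.single_eq_of_ne hj] using h j
  rcases Nat.le_one_iff_eq_zero_or_eq_one.mp (e_apply_self i ▸ h i) with h0 | h1
  · left; funext j; by_cases hji : j = i <;> simp_all
  · right; funext j; by_cases hji : j = i <;> simp_all [e, Pi.single_eq_of_ne]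

variable (Λ : KGraph k)

variable {Λ}

lemma degAt_eq_singleton {m : Fin k → ℕ} {v : Λ.Obj} {μ : Λ.Path}
    (hd : Λ.d μ = m) (hr : Λ.r μ = v) (huniq : ∀ lam, Λ.d lam = m → lam = μ) :
    Λ.degAt m v = {μ} := by
  ext lam
  exact ⟨fun h => huniq lam h.1, fun h => h ▸ ⟨hd, hr⟩⟩

lemma degAt_eq_empty {m : Fin k → ℕ} {w : Λ.Obj} {μ : Λ.Path}
    (hr : Λ.r μ ≠ w) (huniq : ∀ lam, Λ.d lam = m → lam = μ) :
    Λ.degAt m w = ∅ :=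
  Set.eq_empty_of_forall_notMem fun lam h => hr (huniq lam h.1 ▸ h.2)

lemma degAt_eq_empty_of_ι_mem_le {q : Fin k → ℕ} {v : Λ.Obj} {i : Fin k}
    (hv : Λ.ι v ∈ Λ.le q) (hi : e k i ≤ q) : Λ.degAt (e k i) v = ∅ := by
  simpa [Λ.s_ι] using hv.2 i (by simpa [Λ.d_ι] using hi)

lemma ι_mem_le_of_mem_leAt {q : Fin k → ℕ} {v : Λ.Obj} {lam : Λ.Path}
    (hlam : lam ∈ Λ.leAt q v) (hd : Λ.d lam = 0) : Λ.ι v ∈ Λ.le q := by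
  have := hlam.1
  rwa [Λ.eq_ι_of_d_eq_zero hd, hlam.2] at this

lemma leAt_e_eq_degAt {v : Λ.Obj} {i : Fin k} (hne : (Λ.degAt (e k i) v).Nonempty) :
    Λ.leAt (e k i) v = Λ.degAt (e k i) v := by
  ext lam
  constructor
  · intro hlam
    refine ⟨(eq_zero_or_eq_e_of_le_e hlam.1.1).resolve_left fun hd => ?_, hlam.2⟩
    rw [degAt_eq_empty_of_ι_mem_le (ι_mem_le_of_mem_leAt hlam hd) le_rfl] at hne
    exact Set.not_nonempty_empty hne
  · rintro ⟨hd, hr⟩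
    refine ⟨⟨hd.le, fun j hj => absurd hj ?_⟩, hr⟩
    rw [hd]
    simpa using e_ne_zero j

lemma mem_le_e_add_e {lam : Λ.Path} {i j : Fin k} (hd : Λ.d lam = e k i)
    (hs : Λ.degAt (e k j) (Λ.s lam) = ∅) : lam ∈ Λ.le (e k i + e k j) := by
  refine ⟨hd ▸ le_self_add, fun l hl => ?_⟩
  rw [hd, add_le_add_iff_left, e_le_e_iff] at hl
  exact hl ▸ hs

lemma leAt_e_add_e_eq_pair {v : Λ.Obj} {i j : Fin k} {μ ν : Λ.Path}
    (hdμ : Λ.d μ = e k i) (hrμ : Λ.r μ = v) (hdν : Λ.d ν = e k j) (hrν : Λ.r ν = v)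
    (hμ : ∀ lam, Λ.d lam = e k i → lam = μ) (hν : ∀ lam, Λ.d lam = e k j → lam = ν)
    (hdeg : ∀ lam, Λ.d lam = 0 ∨ Λ.d lam = e k i ∨ Λ.d lam = e k j)
    (hsμ : Λ.degAt (e k j) (Λ.s μ) = ∅) (hsν : Λ.degAt (e k i) (Λ.s ν) = ∅) :
    Λ.leAt (e k i + e k j) v = {μ, ν} := by
  ext lam
  constructor
  · intro hlam
    rcases hdeg lam with h0 | hi | hj
    · have hv := degAt_eq_empty_of_ι_mem_le (ι_mem_le_of_mem_leAt hlam h0) le_self_add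
      exact (Set.eq_empty_iff_forall_notMem.mp hv μ ⟨hdμ, hrμ⟩).elim
    · exact Or.inl (hμ lam hi)
    · exact Or.inr (hν lam hj)
  · rintro (rfl | rfl)
    · exact ⟨mem_le_e_add_e hdμ hsμ, hrμ⟩
    · exact ⟨add_comm (e k j) (e k i) ▸ mem_le_e_add_e hdν hsν, hrν⟩

section CuntzKrieger

variable {A : Type} [Ring A] [StarRing A] {S : Λ.Path → A}

lemma IsCK13.apply_eq_range_mul (hS : Λ.IsCK13 S) (lam : Λ.Path) :
    S lam = S (Λ.ι (Λ.r lam)) * S lam :=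
  calc S lam = S (Λ.comp (Λ.ι (Λ.r lam)) lam (Λ.s_ι _)) := by rw [Λ.comp_ι_left]
    _ = S (Λ.ι (Λ.r lam)) * S lam := hS.mul _ _ _

lemma IsCK13.eq_zero_of_range (hS : Λ.IsCK13 S) {lam : Λ.Path}
    (h : S (Λ.ι (Λ.r lam)) = 0) : S lam = 0 := by
  rw [hS.apply_eq_range_mul, h, zero_mul]

lemma IsCK13.source_eq_zero (hS : Λ.IsCK13 S) {lam : Λ.Path} (h : S lam = 0) :
    S (Λ.ι (Λ.s lam)) = 0 := by
  rw [← hS.src, h, mul_zero]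

lemma IsCKFamily.vertex_eq_zero_of_leAt (hS : Λ.IsCKFamily S) {v : Λ.Obj}
    {m n p : Fin k → ℕ} {μ ν : Λ.Path} (hμν : μ ≠ ν) (hm : Λ.leAt m v = {μ})
    (hn : Λ.leAt n v = {ν}) (hp : Λ.leAt p v = {μ, ν}) : S (Λ.ι v) = 0 := by
  have hμ := hS.sum v m
  rw [hm, finsum_mem_singleton] at hμ
  have hν := hS.sum v n
  rw [hn, finsum_mem_singleton] at hν
  have hsum := hS.sum v p
  rw [hp, finsum_mem_pair hμν, ← hμ, ← hν] at hsum
  exact left_eq_add.mp hsum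

end CuntzKrieger

end KGraph

theorem stmt11_general (Λ : KGraph 2) (v w z : Λ.Obj) (e f : Λ.Path)
    (hvw : v ≠ w) (hvz : v ≠ z)
    (hobj : ∀ u : Λ.Obj, u = v ∨ u = w ∨ u = z)
    (hde : Λ.d e = KGraph.e 2 0) (hre : Λ.r e = v) (hse : Λ.s e = w)
    (hdf : Λ.d f = KGraph.e 2 1) (hrf : Λ.r f = v) (hsf : Λ.s f = z)
    (he : ∀ lam : Λ.Path, Λ.d lam = KGraph.e 2 0 → lam = e)
    (hf : ∀ lam : Λ.Path, Λ.d lam = KGraph.e 2 1 → lam = f)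
    (hdeg : ∀ lam : Λ.Path,
      Λ.d lam = 0 ∨ Λ.d lam = KGraph.e 2 0 ∨ Λ.d lam = KGraph.e 2 1)
    {A : Type} [Ring A] [StarRing A] (S : Λ.Path → A) (hS : Λ.IsCKFamily S) :
    ∀ lam : Λ.Path, S lam = 0 := by
  have hef : e ≠ f := fun h =>
    absurd (KGraph.e_injective (hde.symm.trans (h ▸ hdf))) (by decide)
  have hv : S (Λ.ι v) = 0 := hS.vertex_eq_zero_of_leAt hef
    (by rw [KGraph.leAt_e_eq_degAt ⟨e, hde, hre⟩, KGraph.degAt_eq_singleton hde hre he])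
    (by rw [KGraph.leAt_e_eq_degAt ⟨f, hdf, hrf⟩, KGraph.degAt_eq_singleton hdf hrf hf])
    (KGraph.leAt_e_add_e_eq_pair hde hre hdf hrf he hf hdeg
      (hse ▸ KGraph.degAt_eq_empty (hrf ▸ hvw) hf)
      (hsf ▸ KGraph.degAt_eq_empty (hre ▸ hvz) he))
  have hw : S (Λ.ι w) = 0 := hse ▸ hS.source_eq_zero (hS.eq_zero_of_range (hre ▸ hv))
  have hz : S (Λ.ι z) = 0 := hsf ▸ hS.source_eq_zero (hS.eq_zero_of_range (hrf ▸ hv))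
  intro lam
  apply hS.eq_zero_of_range
  rcases hobj (Λ.r lam) with h | h | h <;> rw [h] <;> assumption

/-- in the 2-graph with vertices `v, w, z`, a single edge `e` of
degree `(1,0)` from `w` to `v` and a single edge `f` of degree `(0,1)` from `z`
to `v` and no other nontrivial paths, every Cuntz-Krieger family is zero. -/
theorem stmt11 (Λ : KGraph 2) (v w z : Λ.Obj) (e f : Λ.Path)
    (hvw : v ≠ w) (hvz : v ≠ z) (hwz : w ≠ z)
    (hobj : ∀ u : Λ.Obj, u = v ∨ u = w ∨ u = z)
    (hde : Λ.d e = KGraph.e 2 0) (hre : Λ.r e = v) (hse : Λ.s e = w)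
    (hdf : Λ.d f = KGraph.e 2 1) (hrf : Λ.r f = v) (hsf : Λ.s f = z)
    (he : ∀ lam : Λ.Path, Λ.d lam = KGraph.e 2 0 → lam = e)
    (hf : ∀ lam : Λ.Path, Λ.d lam = KGraph.e 2 1 → lam = f)
    (hdeg : ∀ lam : Λ.Path,
      Λ.d lam = 0 ∨ Λ.d lam = KGraph.e 2 0 ∨ Λ.d lam = KGraph.e 2 1)
    {A : Type} [Ring A] [StarRing A] (S : Λ.Path → A) (hS : Λ.IsCKFamily S) :
    ∀ lam : Λ.Path, S lam = 0 :=
  stmt11_general Λ v w z e f hvw hvz hobj hde hre hse hdf hrf hsf he hf hdeg S hS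
end

section
/- Let Λ be a k-graph with no sources. If Λ fails condition (B) — i.e., there is a vertex v such that for every infinite path x∈Λ^∞(v) there exist distinct α,β∈Λ with αx=βx — then Λ fails the aperiodicity condition (A) at v: for every x∈Λ^∞(v) there exist p≠q∈ℕ^k with σ^p(x)=σ^q(x). Specifically, with m=d(α)∨d(β), σ^{m−d(α)}(x)=σ^{m−d(β)}(x). -/
open scoped ENNReal

/-!
If `αx = βx =: y`, then `σ^{d α} y = x = σ^{d β} y`, so with `m = d α ∨ d β` both
`σ^{m - d α} x` and `σ^{m - d β} x` equal `σ^m y`. These two shifts differ: otherwise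
`d α = d β`, and then `α` and `β` are both the initial segment of `y` of that degree.
-/

namespace InfPath

variable {k : ℕ} {Λ : KGraph k}

theorem toFun_congr (y : InfPath Λ) {a b a' b' : Fin k → ℕ}
    (ha : a = a') (hb : b = b') (h : a ≤ b) (h' : a' ≤ b') :
    y.toFun a b h = y.toFun a' b' h' := by
  subst ha hb
  rfl

theorem ext {x y : InfPath Λ}
    (h : ∀ p q (hpq : p ≤ q), x.toFun p q hpq = y.toFun p q hpq) : x = y := by
  cases x
  cases y
  congr
  funext p q hpq
  exact h p q hpq

theorem shift_shift (p q : Fin k → ℕ) (y : InfPath Λ) :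
    shift p (shift q y) = shift (p + q) y :=
  ext fun _ _ _ => toFun_congr y (add_assoc _ _ _) (add_assoc _ _ _) _ _

theorem shift_tsub_shift {a b : Fin k → ℕ} (hab : a ≤ b) (y : InfPath Λ) :
    shift (b - a) (shift a y) = shift b y := by
  rw [shift_shift, tsub_add_cancel_of_le hab]

theorem shift_sup_tsub_eq_of_eq_shift {a b : Fin k → ℕ} {x x' y : InfPath Λ}
    (hx : shift a y = x) (hx' : shift b y = x') :
    shift (a ⊔ b - a) x = shift (a ⊔ b - b) x' := by
  rw [← hx, ← hx', shift_tsub_shift le_sup_left, shift_tsub_shift le_sup_right]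

end InfPath

theorem stmt19_general {k : ℕ} (Λ : KGraph k)
    (ext : ∀ (lam : Λ.Path) (x : InfPath Λ), Λ.s lam = x.r → InfPath Λ)
    (hext_shift : ∀ lam x h, InfPath.shift (Λ.d lam) (ext lam x h) = x)
    (hext_init : ∀ lam x h (h0 : (0 : Fin k → ℕ) ≤ Λ.d lam),
      (ext lam x h).toFun 0 (Λ.d lam) h0 = lam)
    (v : Λ.Obj)
    (hB : ∀ x : InfPath Λ, x.r = v →
      ∃ (α β : Λ.Path) (h1 : Λ.s α = x.r) (h2 : Λ.s β = x.r),
        α ≠ β ∧ ext α x h1 = ext β x h2) :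
    ∀ x : InfPath Λ, x.r = v →
      ∃ (p q : Fin k → ℕ), p ≠ q ∧ InfPath.shift p x = InfPath.shift q x ∧
        ∃ (α β : Λ.Path) (h1 : Λ.s α = x.r) (h2 : Λ.s β = x.r),
          α ≠ β ∧ ext α x h1 = ext β x h2 ∧
          p = (Λ.d α ⊔ Λ.d β) - Λ.d α ∧ q = (Λ.d α ⊔ Λ.d β) - Λ.d β := by
  intro x hx
  obtain ⟨α, β, hα, hβ, hne, hαβ⟩ := hB x hx
  refine ⟨_, _, ?_, ?_, α, β, hα, hβ, hne, hαβ, rfl, rfl⟩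
  · intro hshift
    have hd : Λ.d α = Λ.d β := (tsub_right_inj le_sup_left le_sup_right).1 hshift
    apply hne
    rw [← hext_init α x hα zero_le, ← hext_init β x hβ zero_le, hαβ]
    exact InfPath.toFun_congr _ rfl hd _ _
  · exact InfPath.shift_sup_tsub_eq_of_eq_shift (hαβ ▸ hext_shift α x hα) (hext_shift β x hβ)

/-- in a `k`-graph with no sources (with `ext` the extension of a
path by an infinite path, characterised by `σ^{d λ}(λx) = x`), if every
infinite path at `v` satisfies `αx = βx` for some `α ≠ β`, then aperiodicity
fails at `v`: every `x ∈ Λ^∞(v)` satisfies `σ^p(x) = σ^q(x)` for some `p ≠ q`,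
specifically `p = (d α ∨ d β) − d α` and `q = (d α ∨ d β) − d β`. -/
theorem stmt19 {k : ℕ} (Λ : KGraph k) (hns : Λ.NoSources)
    (ext : ∀ (lam : Λ.Path) (x : InfPath Λ), Λ.s lam = x.r → InfPath Λ)
    (hext_r : ∀ lam x h, (ext lam x h).r = Λ.r lam)
    (hext_shift : ∀ lam x h, InfPath.shift (Λ.d lam) (ext lam x h) = x)
    (hext_init : ∀ lam x h (h0 : (0 : Fin k → ℕ) ≤ Λ.d lam),
      (ext lam x h).toFun 0 (Λ.d lam) h0 = lam)
    (v : Λ.Obj)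
    (hB : ∀ x : InfPath Λ, x.r = v →
      ∃ (α β : Λ.Path) (h1 : Λ.s α = x.r) (h2 : Λ.s β = x.r),
        α ≠ β ∧ ext α x h1 = ext β x h2) :
    ∀ x : InfPath Λ, x.r = v →
      ∃ (p q : Fin k → ℕ), p ≠ q ∧ InfPath.shift p x = InfPath.shift q x ∧
        ∃ (α β : Λ.Path) (h1 : Λ.s α = x.r) (h2 : Λ.s β = x.r),
          α ≠ β ∧ ext α x h1 = ext β x h2 ∧
          p = (Λ.d α ⊔ Λ.d β) - Λ.d α ∧ q = (Λ.d α ⊔ Λ.d β) - Λ.d β :=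
  stmt19_general Λ ext hext_shift hext_init v hB
end
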